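/- Let V = (v_1,v_2,...) be an enumeration of ℚ² ∩ [0,1]², let b̄ be the 2-Toeplitz sequence associated with V, and let ā ∈ [0,1]^ℕ be the sequence obtained from b̄ by replacing each pair v ∈ [0,1]² by its two coordinates as consecutive terms. Then for every c, d ∈ [0,1], the sequence (c,d,a_1,a_2,...) ∈ [0,1]^ℕ is minimal. -/

import Mathlib

/-!
The sequence `(c, d, a₁, a₂, …)` is the flattening of the sequence of pairs
`P = ((c, d), b'₁, b'₂, …)`. Since `2 ^ m` exactly divides `2 ^ m (2q + 1)`, shifting `P` by
`2 ^ m (2q + 1)` reproduces its first `2 ^ m` terms, except that `(c, d)` is replaced by `v_m`.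
The rational points are dense in the perfect space `[0,1]²`, so `v_m` comes arbitrarily close to
`(c, d)` for arbitrarily large `m`; hence the return times of `P` to any neighbourhood of `P`
have bounded gaps. Flattening only doubles return times, and a uniformly recurrent point of a
continuous map on a regular space lies in the orbit closure of every point of its own orbit
closure.
-/

open Set unitInterval

/-- The left shift `S` on sequences: `S(x₁,x₂,x₃,…) = (x₂,x₃,…)`. -/
def shiftSeq {X : Type*} (z : ℕ → X) : ℕ → X := fun n => z (n + 1)

/-- The closure of the forward shift-orbit `{z, Sz, S²z, …}` of a sequence `z`,
inside the sequence space `ℕ → X`.  (For a compact metric space `X` the product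
topology on `ℕ → X` is exactly the topology of the metric
`d̄(x̄,ȳ) = ∑ᵢ d(xᵢ,yᵢ)/2ⁱ`.) -/
def shiftOrbitClosure {X : Type*} [TopologicalSpace X] (z : ℕ → X) : Set (ℕ → X) :=
  closure (Set.range fun k => shiftSeq^[k] z)

/-- A sequence `z` is *minimal* if the closure of its shift-orbit is a minimal
dynamical system under the shift, i.e. every point of this closure has dense
forward orbit in it. -/
def IsMinimalSeq {X : Type*} [TopologicalSpace X] (z : ℕ → X) : Prop :=
  ∀ w ∈ shiftOrbitClosure z, shiftOrbitClosure z ⊆ shiftOrbitClosure w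

/-- The 2-Toeplitz sequence of `B = (b 0, b 1, …)` (all sequences 0-indexed):
its `n`-th term is `b p` where `2 ^ p` exactly divides `n + 1`; equivalently the
term at (1-indexed) position `j` is `b_i` for all `j ≡ 2^(i-1) (mod 2^i)`. -/
def toeplitz2 {X : Type*} (b : ℕ → X) : ℕ → X :=
  fun n => b (padicValNat 2 (n + 1))

/-- Prepend a term to a sequence. -/
def consSeq {X : Type*} (c : X) (z : ℕ → X) : ℕ → X
  | 0 => c
  | n + 1 => z n

/-- Flatten a sequence of pairs into a sequence, each pair contributing its two
coordinates as consecutive terms. -/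
def flattenPairs {Y : Type*} (b : ℕ → Y × Y) : ℕ → Y := fun n =>
  if n % 2 = 0 then (b (n / 2)).1 else (b (n / 2)).2

open Topology Filter Function

def IsSyndetic (S : Set ℕ) : Prop :=
  ∃ N, ∀ s, ∃ k ∈ S, s ≤ k ∧ k ≤ s + N

theorem IsSyndetic.mono {S T : Set ℕ} (hS : IsSyndetic S) (hST : S ⊆ T) : IsSyndetic T := by
  obtain ⟨N, hN⟩ := hS
  exact ⟨N, fun s => (hN s).imp fun k ⟨hk, hsk⟩ => ⟨hST hk, hsk⟩⟩

theorem isSyndetic_range_mul_add {d : ℕ} (hd : 0 < d) (a : ℕ) :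
    IsSyndetic (range fun q => d * q + a) := by
  refine ⟨d + a, fun s => ⟨d * (s / d + 1) + a, mem_range_self _, ?_, ?_⟩⟩
  · have := Nat.lt_mul_div_succ s hd
    omega
  · have := Nat.mul_div_le s d
    rw [mul_add_one]
    omega

theorem IsSyndetic.image_mul {S : Set ℕ} (hS : IsSyndetic S) {r : ℕ} (hr : 0 < r) :
    IsSyndetic ((r * ·) '' S) := by
  obtain ⟨N, hN⟩ := hS
  refine ⟨r * (N + 1), fun s => ?_⟩
  obtain ⟨k, hk, hsk, hkN⟩ := hN (s / r + 1)
  refine ⟨r * k, mem_image_of_mem _ hk, ?_, ?_⟩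
  · exact (Nat.lt_mul_div_succ s hr).le.trans (Nat.mul_le_mul_left r hsk)
  · calc r * k ≤ r * (s / r) + r * (N + 1) := by nlinarith
      _ ≤ s + r * (N + 1) := by gcongr; exact Nat.mul_div_le s r

def IsUniformlyRecurrent {Y : Type*} [TopologicalSpace Y] (f : Y → Y) (y : Y) : Prop :=
  ∀ U ∈ 𝓝 y, IsSyndetic {k | f^[k] y ∈ U}

section OrbitClosure

variable {Y : Type*} [TopologicalSpace Y] {f : Y → Y} {y w : Y}

theorem IsUniformlyRecurrent.mem_closure_orbit [RegularSpace Y] (hf : Continuous f)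
    (hy : IsUniformlyRecurrent f y) (hw : w ∈ closure (range fun k => f^[k] y)) :
    y ∈ closure (range fun k => f^[k] w) := by
  refine mem_closure_iff_nhds.2 fun U hU => ?_
  obtain ⟨K, hK, hKc, hKU⟩ := exists_mem_nhds_isClosed_subset hU
  obtain ⟨N, hN⟩ := hy K hK
  -- Every orbit point visits `K` within `N` steps; this closed condition passes to `w`.
  have hC : IsClosed (⋃ i ∈ Finset.range (N + 1), f^[i] ⁻¹' K) :=
    isClosed_biUnion_finset fun i _ => hKc.preimage (hf.iterate i)
  have horbit : range (fun k => f^[k] y) ⊆ ⋃ i ∈ Finset.range (N + 1), f^[i] ⁻¹' K := by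
    rintro _ ⟨s, rfl⟩
    obtain ⟨k, hk, hsk, hkN⟩ := hN s
    simp only [mem_iUnion, mem_preimage, Finset.mem_range, ← iterate_add_apply]
    exact ⟨k - s, by omega, by rwa [Nat.sub_add_cancel hsk]⟩
  obtain ⟨i, -, hi⟩ := mem_iUnion₂.1 (closure_minimal horbit hC hw)
  exact ⟨f^[i] w, hKU hi, mem_range_self i⟩

theorem Continuous.mapsTo_closure_orbit (hf : Continuous f) (w : Y) :
    MapsTo f (closure (range fun k => f^[k] w)) (closure (range fun k => f^[k] w)) :=
  MapsTo.closure (by rintro _ ⟨k, rfl⟩; exact ⟨k + 1, iterate_succ_apply' f k w⟩) hf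

theorem closure_orbit_subset_of_mem_closure_orbit (hf : Continuous f)
    (h : y ∈ closure (range fun k => f^[k] w)) :
    closure (range fun k => f^[k] y) ⊆ closure (range fun k => f^[k] w) :=
  closure_minimal (range_subset_iff.2 fun k => (hf.mapsTo_closure_orbit w).iterate k h)
    isClosed_closure

theorem IsUniformlyRecurrent.map {Z : Type*} [TopologicalSpace Z] {g : Z → Z} {φ : Y → Z}
    (hy : IsUniformlyRecurrent f y) (hφ : Continuous φ) {r : ℕ} (hr : 0 < r)
    (hφfg : Semiconj φ f g^[r]) : IsUniformlyRecurrent g (φ y) := by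
  intro U hU
  refine ((hy _ (hφ.continuousAt.preimage_mem_nhds hU)).image_mul hr).mono ?_
  rintro _ ⟨k, hk, rfl⟩
  show g^[r * k] (φ y) ∈ U
  rw [iterate_mul, ← (hφfg.iterate_right k).eq y]
  exact hk

end OrbitClosure

section Sequences

variable {X : Type*}

theorem shiftSeq_iterate_apply (k : ℕ) (z : ℕ → X) (n : ℕ) : shiftSeq^[k] z n = z (n + k) := by
  induction k generalizing z with
  | zero => rfl
  | succ k ih => exact ih (shiftSeq z)

theorem continuous_shiftSeq [TopologicalSpace X] : Continuous (shiftSeq : (ℕ → X) → ℕ → X) :=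
  continuous_pi fun n => continuous_apply (n + 1)

theorem isMinimalSeq_of_isUniformlyRecurrent [TopologicalSpace X] [RegularSpace X] {z : ℕ → X}
    (hz : IsUniformlyRecurrent shiftSeq z) : IsMinimalSeq z := fun _ hw =>
  closure_orbit_subset_of_mem_closure_orbit continuous_shiftSeq
    (hz.mem_closure_orbit continuous_shiftSeq hw)

theorem continuous_flattenPairs [TopologicalSpace X] :
    Continuous (flattenPairs : (ℕ → X × X) → ℕ → X) :=
  continuous_pi fun n => by unfold flattenPairs; split_ifs <;> fun_prop

theorem semiconj_flattenPairs_shiftSeq :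
    Semiconj (flattenPairs : (ℕ → X × X) → ℕ → X) shiftSeq shiftSeq^[2] := fun b => by
  funext n
  rw [shiftSeq_iterate_apply]
  simp only [flattenPairs, shiftSeq, Nat.add_mod_right, Nat.add_div_right n two_pos]

theorem consSeq_consSeq_flattenPairs (c d : X) (b : ℕ → X × X) :
    consSeq c (consSeq d (flattenPairs b)) = flattenPairs (consSeq (c, d) b) := by
  funext n
  rcases n with _ | _ | n
  · rfl
  · rfl
  · simp only [consSeq, flattenPairs, show (n + 1 + 1) % 2 = n % 2 by omega,
      show (n + 1 + 1) / 2 = n / 2 + 1 by omega]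

theorem exists_pi_Iio_subset_of_mem_nhds [TopologicalSpace X] {x : ℕ → X} {U : Set (ℕ → X)}
    (hU : U ∈ 𝓝 x) : ∃ L, ∃ t : ℕ → Set X, (∀ j, t j ∈ 𝓝 (x j)) ∧ (Iio L).pi t ⊆ U := by
  obtain ⟨J, t, ht, hJU⟩ := Filter.mem_pi'.1 (nhds_pi (a := x) ▸ hU)
  obtain ⟨L, hL⟩ := J.exists_nat_subset_range
  exact ⟨L, t, ht, fun y hy => hJU fun j hj => hy j (Finset.mem_range.1 (hL hj))⟩

end Sequences

section Toeplitz

theorem padicValNat_pow_mul_add {p : ℕ} [Fact p.Prime] {m s : ℕ} (q : ℕ) (hs0 : s ≠ 0)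
    (hs : s < p ^ m) : padicValNat p (p ^ m * q + s) = padicValNat p s := by
  have hx : p ^ m * q + s ≠ 0 := by omega
  have hdvd : ∀ k, p ^ k ∣ p ^ m * q + s ↔ p ^ k ∣ s := by
    intro k
    rcases le_or_gt k m with hkm | hmk
    · exact Nat.dvd_add_right (dvd_mul_of_dvd_left (pow_dvd_pow p hkm) q)
    · have hms : ¬p ^ m ∣ s := fun h => (Nat.le_of_dvd (by omega) h).not_gt hs
      have hpow : p ^ m ∣ p ^ k := pow_dvd_pow p hmk.le
      refine iff_of_false (fun h => hms ?_) (fun h => hms (hpow.trans h))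
      exact (Nat.dvd_add_right (dvd_mul_right _ _)).1 (hpow.trans h)
  refine le_antisymm ?_ ?_
  · exact (padicValNat_dvd_iff_le hs0).1 ((hdvd _).1 ((padicValNat_dvd_iff_le hx).2 le_rfl))
  · exact (padicValNat_dvd_iff_le hx).1 ((hdvd _).2 ((padicValNat_dvd_iff_le hs0).2 le_rfl))

variable {X : Type*}

theorem toeplitz2_two_pow_mul_add (b : ℕ → X) {m k : ℕ} (q : ℕ) (hk : k + 1 < 2 ^ m) :
    toeplitz2 b (2 ^ m * q + k) = toeplitz2 b k := by
  rw [toeplitz2, toeplitz2, add_assoc, padicValNat_pow_mul_add q k.succ_ne_zero hk]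

theorem toeplitz2_two_pow_mul_odd_sub_one (b : ℕ → X) (m q : ℕ) :
    toeplitz2 b (2 ^ m * (2 * q + 1) - 1) = b m := by
  have hodd : padicValNat 2 (2 * q + 1) = 0 := padicValNat.eq_zero_of_not_dvd (by omega)
  rw [toeplitz2, Nat.sub_add_cancel (Nat.one_le_iff_ne_zero.2 (by positivity)),
    padicValNat.mul (by positivity) (by omega), padicValNat.prime_pow, hodd, add_zero]

theorem shiftSeq_iterate_consSeq_toeplitz2_apply (p : X) (b : ℕ → X) {m j : ℕ} (q : ℕ)
    (hj : j < 2 ^ m) :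
    shiftSeq^[2 ^ m * (2 * q + 1)] (consSeq p (toeplitz2 b)) j = consSeq (b m) (toeplitz2 b) j := by
  have hpos : 0 < 2 ^ m * (2 * q + 1) := by positivity
  rw [shiftSeq_iterate_apply]
  rcases j with _ | i
  · rw [zero_add, ← Nat.sub_add_cancel hpos]
    exact toeplitz2_two_pow_mul_odd_sub_one b m q
  · rw [show i + 1 + 2 ^ m * (2 * q + 1) = 2 ^ m * (2 * q + 1) + i + 1 by ring]
    exact toeplitz2_two_pow_mul_add b _ hj

theorem isUniformlyRecurrent_consSeq_toeplitz2 [TopologicalSpace X] {b : ℕ → X} {p : X}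
    (hp : MapClusterPt p atTop b) : IsUniformlyRecurrent shiftSeq (consSeq p (toeplitz2 b)) := by
  intro U hU
  obtain ⟨L, t, ht, htU⟩ := exists_pi_Iio_subset_of_mem_nhds hU
  obtain ⟨m, hLm, hm⟩ := (mapClusterPt_iff_frequently.1 hp _ (ht 0)).forall_exists_of_atTop L
  refine (isSyndetic_range_mul_add (pow_pos two_pos (m + 1)) (2 ^ m)).mono ?_
  rintro _ ⟨q, rfl⟩
  show shiftSeq^[2 ^ (m + 1) * q + 2 ^ m] _ ∈ U
  refine htU fun j (hj : j < L) => ?_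
  have hjm : j < 2 ^ m := hj.trans_le (hLm.trans Nat.lt_two_pow_self.le)
  rw [show 2 ^ (m + 1) * q + 2 ^ m = 2 ^ m * (2 * q + 1) by ring,
    shiftSeq_iterate_consSeq_toeplitz2_apply p b q hjm]
  rcases j with _ | i
  · exact hm
  · exact mem_of_mem_nhds (ht (i + 1))

end Toeplitz

theorem mapClusterPt_atTop_of_denseRange {X : Type*} [TopologicalSpace X] [T1Space X]
    [∀ x : X, NeBot (𝓝[≠] x)] {v : ℕ → X} (hv : DenseRange v) (p : X) :
    MapClusterPt p atTop v := by
  refine mapClusterPt_iff_frequently.2 fun W hW => frequently_atTop.2 fun M => ?_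
  obtain ⟨_, hyW, ⟨m, rfl⟩, hm⟩ :=
    mem_closure_iff_nhds.1 (hv.sdiff_finite ((finite_Iio M).image v) p) W hW
  exact ⟨m, not_lt.1 fun h => hm (mem_image_of_mem v h), hyW⟩

theorem dense_setOf_exists_ratCast_eq : Dense {x : I | ∃ q : ℚ, (q : ℝ) = x} :=
  dense_of_exists_between fun a b hab => by
    obtain ⟨q, haq, hqb⟩ := exists_rat_btwn (show (a : ℝ) < b from hab)
    exact ⟨⟨q, a.2.1.trans haq.le, hqb.le.trans b.2.2⟩, ⟨q, rfl⟩, haq, hqb⟩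

theorem cons_cons_flatten_toeplitz2_of_rat_sq_enumeration_isMinimalSeq_general
    (v : ℕ → I × I)
    (hrange : Set.range v =
      {x : I × I | (∃ q : ℚ, (q : ℝ) = (x.1 : ℝ)) ∧ ∃ q : ℚ, (q : ℝ) = (x.2 : ℝ)})
    (c d : I) :
    IsMinimalSeq (consSeq c (consSeq d (flattenPairs (toeplitz2 v)))) := by
  have hv : DenseRange v := by
    rw [DenseRange, hrange]
    exact dense_setOf_exists_ratCast_eq.prod dense_setOf_exists_ratCast_eq
  rw [consSeq_consSeq_flattenPairs]
  exact isMinimalSeq_of_isUniformlyRecurrent <|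
    (isUniformlyRecurrent_consSeq_toeplitz2 (mapClusterPt_atTop_of_denseRange hv _)).map
      continuous_flattenPairs two_pos semiconj_flattenPairs_shiftSeq

/-- If `v` is an enumeration of `ℚ² ∩ [0,1]²`, `b̄` is its 2-Toeplitz sequence and
`ā ∈ [0,1]ᴺ` is obtained from `b̄` by replacing each pair by its two coordinates as
consecutive terms, then `(c, d, a₁, a₂, …)` is minimal for all `c, d ∈ [0,1]`. -/
theorem cons_cons_flatten_toeplitz2_of_rat_sq_enumeration_isMinimalSeq
    (v : ℕ → I × I) (hinj : Function.Injective v)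
    (hrange : Set.range v =
      {x : I × I | (∃ q : ℚ, (q : ℝ) = (x.1 : ℝ)) ∧ ∃ q : ℚ, (q : ℝ) = (x.2 : ℝ)})
    (c d : I) :
    IsMinimalSeq (consSeq c (consSeq d (flattenPairs (toeplitz2 v)))) :=
  cons_cons_flatten_toeplitz2_of_rat_sq_enumeration_isMinimalSeq_general v hrange c d
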